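/- arXiv:1103.1418 — 2 statements merged into one kernel-verified Lean document; each statement's English description precedes it below -/
import Mathlib

section
/- Let a₁, a₂, a₃ be nonzero integers and n an integer with d₃ = gcd(gcd(a₁,a₂), a₃) dividing n. With d₂ = gcd(a₁,a₂), n₁ = n/d₃, ā₁ = a₁/d₂, ā₂ = a₂/d₂, ā₃ = a₃/d₃, d̄₁ = ā₁, d̄₂ = d₂/d₃, for all integers t₁, t₂ the triple x₁ = n₁·d̄₁^(φ(|ā₂|)−1)·d̄₂^(φ(|ā₃|)−1) + ā₂t₁ + ā₃·d̄₁^(φ(|ā₂|)−1)t₂, x₂ = (n₁/ā₂)(1 − d̄₁^φ(|ā₂|))·d̄₂^(φ(|ā₃|)−1) − d̄₁t₁ + (ā₃/ā₂)(1 − d̄₁^φ(|ā₂|))t₂, x₃ = (n₁/ā₃)(1 − d̄₂^φ(|ā₃|)) − d̄₂t₂ is an integral solution of a₁x₁ + a₂x₂ + a₃x₃ = n. -/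
/-!
Both Bézout identities are produced by Euler's theorem: if `gcd(x, m) = 1` then
`x ^ (φ|m| - 1) * x + ((1 - x ^ φ|m|) / m) * m = 1`.  The general solution of `a x + b y = c` for
coprime `a, b` with Bézout coefficients `u, v` is `(c u + b t, c v - a t)`.  First solve
`d̄₂ y + ā₃ x₃ = n₁` with parameter `t₂`, then `d̄₁ x₁ + ā₂ x₂ = y` with parameter `t₁`; multiplying
by `d₂ = d₃ d̄₂` and `d₃` and adding gives `a₁ x₁ + a₂ x₂ + a₃ x₃ = d₃ n₁ = n`.
-/

open Nat (totient)

theorem Int.ModEq.pow_totient {x : ℤ} {m : ℕ} (h : IsCoprime x m) : x ^ totient m ≡ 1 [ZMOD m] := by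
  rw [← ZMod.intCast_eq_intCast_iff]
  push_cast
  rw [← ZMod.coe_unitOfIsCoprime x h, ← Units.val_pow_eq_pow_val, ZMod.pow_totient, Units.val_one]

theorem Int.dvd_one_sub_pow_totient {x m : ℤ} (h : IsCoprime x m) :
    m ∣ 1 - x ^ totient m.natAbs :=
  Int.natAbs_dvd.mp <| Int.ModEq.dvd <|
    Int.ModEq.pow_totient (by rwa [Int.natCast_natAbs, IsCoprime.abs_right_iff])

theorem Int.pow_totient_pred_mul_add_ediv_mul_eq_one {x m : ℤ} (h : IsCoprime x m) (hm : m ≠ 0) :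
    x ^ (totient m.natAbs - 1) * x + (1 - x ^ totient m.natAbs) / m * m = 1 := by
  rw [Int.ediv_mul_cancel (Int.dvd_one_sub_pow_totient h), ← pow_succ,
    Nat.sub_add_cancel (Nat.totient_pos.2 (Int.natAbs_pos.2 hm))]
  ring

theorem Int.isCoprime_ediv_gcd_ediv_gcd {a b : ℤ} (hb : b ≠ 0) :
    IsCoprime (a / Int.gcd a b) (b / Int.gcd a b) :=
  Int.coe_gcd a b ▸ isCoprime_div_gcd_div_gcd hb

theorem mul_add_mul_sub_eq_of_bezout {R : Type*} [CommRing R] {a b u v : R}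
    (h : u * a + v * b = 1) (c t : R) : a * (c * u + b * t) + b * (c * v - a * t) = c := by
  linear_combination c * h

theorem three_var_sol_forward_general (a₁ a₂ a₃ n : ℤ)
    (h₂ : a₂ ≠ 0) (h₃ : a₃ ≠ 0)
    (d₂ d₃ n₁ ab1 ab2 ab3 db1 db2 : ℤ)
    (hd₂ : d₂ = Int.gcd a₁ a₂) (hd₃ : d₃ = Int.gcd d₂ a₃) (hdn : d₃ ∣ n)
    (hn₁ : n₁ = n / d₃) (hab1 : ab1 = a₁ / d₂) (hab2 : ab2 = a₂ / d₂) (hab3 : ab3 = a₃ / d₃)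
    (hdb1 : db1 = ab1) (hdb2 : db2 = d₂ / d₃) (t₁ t₂ : ℤ) :
    a₁ * (n₁ * db1 ^ (Nat.totient ab2.natAbs - 1) * db2 ^ (Nat.totient ab3.natAbs - 1)
          + ab2 * t₁ + ab3 * db1 ^ (Nat.totient ab2.natAbs - 1) * t₂)
    + a₂ * (n₁ * (1 - db1 ^ Nat.totient ab2.natAbs) / ab2 * db2 ^ (Nat.totient ab3.natAbs - 1)
          - db1 * t₁ + ab3 * (1 - db1 ^ Nat.totient ab2.natAbs) / ab2 * t₂)
    + a₃ * (n₁ * (1 - db2 ^ Nat.totient ab3.natAbs) / ab3 - db2 * t₂) = n := by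
  subst hdb1
  have ea₁ : a₁ = d₂ * db1 := by rw [hab1, Int.mul_ediv_cancel' (hd₂ ▸ Int.gcd_dvd_left a₁ a₂)]
  have ea₂ : a₂ = d₂ * ab2 := by rw [hab2, Int.mul_ediv_cancel' (hd₂ ▸ Int.gcd_dvd_right a₁ a₂)]
  have ea₃ : a₃ = d₃ * ab3 := by rw [hab3, Int.mul_ediv_cancel' (hd₃ ▸ Int.gcd_dvd_right d₂ a₃)]
  have ed₂ : d₂ = d₃ * db2 := by rw [hdb2, Int.mul_ediv_cancel' (hd₃ ▸ Int.gcd_dvd_left d₂ a₃)]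
  have en : n = d₃ * n₁ := by rw [hn₁, Int.mul_ediv_cancel' hdn]
  have hcop₂ : IsCoprime db1 ab2 := hab1 ▸ hab2 ▸ hd₂ ▸ Int.isCoprime_ediv_gcd_ediv_gcd h₂
  have hcop₃ : IsCoprime db2 ab3 := hdb2 ▸ hab3 ▸ hd₃ ▸ Int.isCoprime_ediv_gcd_ediv_gcd h₃
  have hab2 : ab2 ≠ 0 := right_ne_zero_of_mul (ea₂ ▸ h₂)
  have hab3 : ab3 ≠ 0 := right_ne_zero_of_mul (ea₃ ▸ h₃)
  rw [Int.mul_ediv_assoc _ (Int.dvd_one_sub_pow_totient hcop₂),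
    Int.mul_ediv_assoc _ (Int.dvd_one_sub_pow_totient hcop₂),
    Int.mul_ediv_assoc _ (Int.dvd_one_sub_pow_totient hcop₃)]
  have hy := mul_add_mul_sub_eq_of_bezout
    (Int.pow_totient_pred_mul_add_ediv_mul_eq_one hcop₃ hab3) n₁ t₂
  have hx := mul_add_mul_sub_eq_of_bezout (Int.pow_totient_pred_mul_add_ediv_mul_eq_one hcop₂ hab2)
    (n₁ * db2 ^ (totient ab3.natAbs - 1) + ab3 * t₂) t₁
  rw [ea₁, ea₂, ea₃, ed₂, en]
  linear_combination d₃ * db2 * hx + d₃ * hy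

theorem three_var_sol_forward (a₁ a₂ a₃ n : ℤ)
    (h₁ : a₁ ≠ 0) (h₂ : a₂ ≠ 0) (h₃ : a₃ ≠ 0)
    (d₂ d₃ n₁ ab1 ab2 ab3 db1 db2 : ℤ)
    (hd₂ : d₂ = Int.gcd a₁ a₂) (hd₃ : d₃ = Int.gcd d₂ a₃) (hdn : d₃ ∣ n)
    (hn₁ : n₁ = n / d₃) (hab1 : ab1 = a₁ / d₂) (hab2 : ab2 = a₂ / d₂) (hab3 : ab3 = a₃ / d₃)
    (hdb1 : db1 = ab1) (hdb2 : db2 = d₂ / d₃) (t₁ t₂ : ℤ) :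
    a₁ * (n₁ * db1 ^ (Nat.totient ab2.natAbs - 1) * db2 ^ (Nat.totient ab3.natAbs - 1)
          + ab2 * t₁ + ab3 * db1 ^ (Nat.totient ab2.natAbs - 1) * t₂)
    + a₂ * (n₁ * (1 - db1 ^ Nat.totient ab2.natAbs) / ab2 * db2 ^ (Nat.totient ab3.natAbs - 1)
          - db1 * t₁ + ab3 * (1 - db1 ^ Nat.totient ab2.natAbs) / ab2 * t₂)
    + a₃ * (n₁ * (1 - db2 ^ Nat.totient ab3.natAbs) / ab3 - db2 * t₂) = n :=
  three_var_sol_forward_general a₁ a₂ a₃ n h₂ h₃ d₂ d₃ n₁ ab1 ab2 ab3 db1 db2 hd₂ hd₃ hdn hn₁ hab1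
    hab2 hab3 hdb1 hdb2 t₁ t₂
end

section
/- Let a₁, a₂, a₃ be nonzero integers and n an integer with gcd(a₁,a₂,a₃) dividing n. Then every integral solution (x₁,x₂,x₃) of a₁x₁ + a₂x₂ + a₃x₃ = n arises, for some integers t₁, t₂, from the formulas x₁ = n₁·d̄₁^(φ(|ā₂|)−1)·d̄₂^(φ(|ā₃|)−1) + ā₂t₁ + ā₃·d̄₁^(φ(|ā₂|)−1)t₂, x₂ = (n₁/ā₂)(1 − d̄₁^φ(|ā₂|))·d̄₂^(φ(|ā₃|)−1) − d̄₁t₁ + (ā₃/ā₂)(1 − d̄₁^φ(|ā₂|))t₂, x₃ = (n₁/ā₃)(1 − d̄₂^φ(|ā₃|)) − d̄₂t₂. -/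
/-!
Everything reduces to two variables: for coprime `a, b` with `b ≠ 0`, Euler's theorem gives
`b ∣ 1 - a ^ φ |b|`, so `(m a ^ (φ |b| - 1), m (1 - a ^ φ |b|) / b)` solves `a x + b y = m`, and
every solution differs from it by a multiple of `(b, -a)`. Dividing by `d₃` turns the equation into
`d̄₂ (d̄₁ x₁ + ā₂ x₂) + ā₃ x₃ = n₁` with `d̄₂, ā₃` coprime, which parametrises `x₃` and the inner
sum `d̄₁ x₁ + ā₂ x₂` by `t₂`; the coprime equation for that inner sum parametrises `x₁, x₂` by `t₁`.
-/

open scoped Nat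

theorem Int.isCoprime_ediv_gcd_ediv_gcd_s13 {i j : ℤ} (hj : j ≠ 0) :
    IsCoprime (i / i.gcd j) (j / i.gcd j) :=
  Int.isCoprime_iff_gcd_eq_one.mpr (Int.gcd_ediv_gcd_ediv_gcd (Int.gcd_pos_of_ne_zero_right i hj))

theorem IsCoprime.dvd_one_sub_pow_totient {a b : ℤ} (h : IsCoprime a b) :
    b ∣ 1 - a ^ φ b.natAbs := by
  rw [← Int.natAbs_dvd, ← ZMod.intCast_zmod_eq_zero_iff_dvd]
  have hb : (b : ZMod b.natAbs) = 0 :=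
    (ZMod.intCast_zmod_eq_zero_iff_dvd _ _).mpr (Int.natAbs_dvd.mpr dvd_rfl)
  obtain ⟨u, hu⟩ : IsUnit (a : ZMod b.natAbs) :=
    isCoprime_zero_right.mp (by simpa [hb] using h.map (Int.castRingHom (ZMod b.natAbs)))
  push_cast
  rw [← hu, ← Units.val_pow_eq_pow_val, ZMod.pow_totient, Units.val_one, sub_self]

theorem IsCoprime.exists_eq_of_mul_add_mul_eq {a b x y m : ℤ} (hab : IsCoprime a b) (hb : b ≠ 0)
    (h : a * x + b * y = m) :
    ∃ t, x = m * a ^ (φ b.natAbs - 1) + b * t ∧ y = m * (1 - a ^ φ b.natAbs) / b - a * t := by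
  obtain ⟨k, hk⟩ := hab.dvd_one_sub_pow_totient
  have hpow : a ^ φ b.natAbs = a * a ^ (φ b.natAbs - 1) := by
    rw [← pow_succ', Nat.sub_add_cancel (Nat.totient_pos.mpr (Int.natAbs_pos.mpr hb))]
  obtain ⟨t, ht⟩ : b ∣ x - m * a ^ (φ b.natAbs - 1) :=
    hab.symm.dvd_of_dvd_mul_left ⟨m * k - y, by linear_combination h + m * hk + m * hpow⟩
  refine ⟨t, by linear_combination ht, ?_⟩
  rw [hk, mul_left_comm, Int.mul_ediv_cancel_left _ hb]
  exact mul_left_cancel₀ hb (by linear_combination h - a * ht + m * hk + m * hpow)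

theorem three_var_sol_complete_general (a₁ a₂ a₃ n : ℤ)
    (h₂ : a₂ ≠ 0) (h₃ : a₃ ≠ 0)
    (d₂ d₃ n₁ ab1 ab2 ab3 db1 db2 : ℤ)
    (hd₂ : d₂ = Int.gcd a₁ a₂) (hd₃ : d₃ = Int.gcd d₂ a₃) (hdn : d₃ ∣ n)
    (hn₁ : n₁ = n / d₃) (hab1 : ab1 = a₁ / d₂) (hab2 : ab2 = a₂ / d₂) (hab3 : ab3 = a₃ / d₃)
    (hdb1 : db1 = ab1) (hdb2 : db2 = d₂ / d₃)
    (x₁ x₂ x₃ : ℤ) (hsol : a₁ * x₁ + a₂ * x₂ + a₃ * x₃ = n) :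
    ∃ t₁ t₂ : ℤ,
      x₁ = n₁ * db1 ^ (Nat.totient ab2.natAbs - 1) * db2 ^ (Nat.totient ab3.natAbs - 1)
            + ab2 * t₁ + ab3 * db1 ^ (Nat.totient ab2.natAbs - 1) * t₂ ∧
      x₂ = n₁ * (1 - db1 ^ Nat.totient ab2.natAbs) / ab2 * db2 ^ (Nat.totient ab3.natAbs - 1)
            - db1 * t₁ + ab3 * (1 - db1 ^ Nat.totient ab2.natAbs) / ab2 * t₂ ∧
      x₃ = n₁ * (1 - db2 ^ Nat.totient ab3.natAbs) / ab3 - db2 * t₂ := by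
  have hcop₁ : IsCoprime db1 ab2 := by
    rw [hdb1, hab1, hab2, hd₂]; exact Int.isCoprime_ediv_gcd_ediv_gcd_s13 h₂
  have hcop₂ : IsCoprime db2 ab3 := by
    rw [hdb2, hab3, hd₃]; exact Int.isCoprime_ediv_gcd_ediv_gcd_s13 h₃
  have ha₁ : a₁ = d₂ * db1 := by
    rw [hdb1, hab1, Int.mul_ediv_cancel' (hd₂ ▸ Int.gcd_dvd_left a₁ a₂)]
  have ha₂ : a₂ = d₂ * ab2 := by rw [hab2, Int.mul_ediv_cancel' (hd₂ ▸ Int.gcd_dvd_right a₁ a₂)]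
  have ha₃ : a₃ = d₃ * ab3 := by rw [hab3, Int.mul_ediv_cancel' (hd₃ ▸ Int.gcd_dvd_right d₂ a₃)]
  have hd₂eq : d₂ = d₃ * db2 := by rw [hdb2, Int.mul_ediv_cancel' (hd₃ ▸ Int.gcd_dvd_left d₂ a₃)]
  have hn : n = d₃ * n₁ := by rw [hn₁, Int.mul_ediv_cancel' hdn]
  have hd₃ne : d₃ ≠ 0 := by rw [hd₃]; exact_mod_cast (Int.gcd_pos_of_ne_zero_right d₂ h₃).ne'
  have hab2ne : ab2 ≠ 0 := right_ne_zero_of_mul (ha₂ ▸ h₂)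
  have hab3ne : ab3 ≠ 0 := right_ne_zero_of_mul (ha₃ ▸ h₃)
  have hreduced : db2 * (db1 * x₁ + ab2 * x₂) + ab3 * x₃ = n₁ :=
    mul_left_cancel₀ hd₃ne (by
      linear_combination hsol - x₁ * ha₁ - x₂ * ha₂ - x₃ * ha₃ + hn - (db1 * x₁ + ab2 * x₂) * hd₂eq)
  obtain ⟨t₂, hinner, hx₃⟩ := hcop₂.exists_eq_of_mul_add_mul_eq hab3ne hreduced
  obtain ⟨t₁, hx₁, hx₂⟩ := hcop₁.exists_eq_of_mul_add_mul_eq hab2ne hinner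
  have hdvd := hcop₁.dvd_one_sub_pow_totient
  refine ⟨t₁, t₂, by rw [hx₁]; ring, ?_, hx₃⟩
  rw [hx₂, Int.mul_ediv_assoc _ hdvd, Int.mul_ediv_assoc _ hdvd, Int.mul_ediv_assoc _ hdvd]
  ring

theorem three_var_sol_complete (a₁ a₂ a₃ n : ℤ)
    (h₁ : a₁ ≠ 0) (h₂ : a₂ ≠ 0) (h₃ : a₃ ≠ 0)
    (d₂ d₃ n₁ ab1 ab2 ab3 db1 db2 : ℤ)
    (hd₂ : d₂ = Int.gcd a₁ a₂) (hd₃ : d₃ = Int.gcd d₂ a₃) (hdn : d₃ ∣ n)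
    (hn₁ : n₁ = n / d₃) (hab1 : ab1 = a₁ / d₂) (hab2 : ab2 = a₂ / d₂) (hab3 : ab3 = a₃ / d₃)
    (hdb1 : db1 = ab1) (hdb2 : db2 = d₂ / d₃)
    (x₁ x₂ x₃ : ℤ) (hsol : a₁ * x₁ + a₂ * x₂ + a₃ * x₃ = n) :
    ∃ t₁ t₂ : ℤ,
      x₁ = n₁ * db1 ^ (Nat.totient ab2.natAbs - 1) * db2 ^ (Nat.totient ab3.natAbs - 1)
            + ab2 * t₁ + ab3 * db1 ^ (Nat.totient ab2.natAbs - 1) * t₂ ∧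
      x₂ = n₁ * (1 - db1 ^ Nat.totient ab2.natAbs) / ab2 * db2 ^ (Nat.totient ab3.natAbs - 1)
            - db1 * t₁ + ab3 * (1 - db1 ^ Nat.totient ab2.natAbs) / ab2 * t₂ ∧
      x₃ = n₁ * (1 - db2 ^ Nat.totient ab3.natAbs) / ab3 - db2 * t₂ :=
  three_var_sol_complete_general a₁ a₂ a₃ n h₂ h₃ d₂ d₃ n₁ ab1 ab2 ab3 db1 db2 hd₂ hd₃ hdn hn₁ hab1
    hab2 hab3 hdb1 hdb2 x₁ x₂ x₃ hsol
end
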